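/- arXiv:2512.21752 — 9 statements merged into one kernel-verified Lean document; each statement's English description precedes it below -/
import Mathlib

section
/- Let p > 1 be a real number and n a natural number. For all vectors a, b in EuclideanSpace ℝ (Fin n) and all real numbers u, v with u ≥ 0 and v > 0, the Picone expression is nonnegative: ‖a‖^p − p·(u^(p−1)/v^(p−1))·‖b‖^(p−2)·⟪a, b⟫ + (p−1)·(u^p/v^p)·‖b‖^p ≥ 0, where the middle term ‖b‖^(p−2)·⟪a, b⟫ is interpreted as 0 when b = 0. -/
/-!
By Cauchy–Schwarz, `‖b‖^(p-2) ⟪a, b⟫ ≤ ‖a‖ ‖b‖^(p-1)`, so with `t = u / v` it suffices that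
`p ‖a‖ (t ‖b‖)^(p-1) ≤ ‖a‖^p + (p-1) (t ‖b‖)^p`, which is Young's inequality for the
conjugate exponents `p` and `p / (p - 1)`.
-/

theorem Real.mul_mul_rpow_sub_one_le {p x y : ℝ} (hp : 1 < p) (hx : 0 ≤ x) (hy : 0 ≤ y) :
    p * (x * y ^ (p - 1)) ≤ x ^ p + (p - 1) * y ^ p := by
  have hp0 : 0 < p := by linarith
  have hp1 : p - 1 ≠ 0 := by linarith
  have hpq : p.HolderConjugate (p / (p - 1)) :=
    (Real.holderConjugate_iff_eq_conjExponent hp).2 rfl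
  have hpow : (y ^ (p - 1)) ^ (p / (p - 1)) = y ^ p := by
    rw [← Real.rpow_mul hy, mul_div_cancel₀ _ hp1]
  have young := Real.young_inequality_of_nonneg hx (Real.rpow_nonneg hy (p - 1)) hpq
  rw [hpow] at young
  calc p * (x * y ^ (p - 1)) ≤ p * (x ^ p / p + y ^ p / (p / (p - 1))) := by gcongr
    _ = x ^ p + (p - 1) * y ^ p := by field_simp

theorem rpow_norm_sub_two_mul_inner_le {E : Type*} [NormedAddCommGroup E]
    [InnerProductSpace ℝ E] (p : ℝ) (a b : E) :
    ‖b‖ ^ (p - 2) * inner ℝ a b ≤ ‖a‖ * ‖b‖ ^ (p - 1) := by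
  rcases eq_or_ne b 0 with rfl | hb
  · simp only [inner_zero_right, mul_zero]
    positivity
  have hb0 : ‖b‖ ≠ 0 := norm_ne_zero_iff.mpr hb
  calc ‖b‖ ^ (p - 2) * inner ℝ a b ≤ ‖b‖ ^ (p - 2) * (‖a‖ * ‖b‖) := by
        gcongr
        exact real_inner_le_norm a b
    _ = ‖a‖ * ‖b‖ ^ (p - 2 + 1) := by rw [Real.rpow_add_one hb0]; ring
    _ = ‖a‖ * ‖b‖ ^ (p - 1) := by ring_nf

theorem picone_inner_nonneg {E : Type*} [NormedAddCommGroup E] [InnerProductSpace ℝ E]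
    {p t : ℝ} (hp : 1 < p) (ht : 0 ≤ t) (a b : E) :
    0 ≤ ‖a‖ ^ p - p * t ^ (p - 1) * (‖b‖ ^ (p - 2) * inner ℝ a b)
        + (p - 1) * t ^ p * ‖b‖ ^ p := by
  have hb := norm_nonneg b
  have cauchy_schwarz : p * t ^ (p - 1) * (‖b‖ ^ (p - 2) * inner ℝ a b)
      ≤ p * t ^ (p - 1) * (‖a‖ * ‖b‖ ^ (p - 1)) := by
    have : 0 ≤ p := by linarith
    exact mul_le_mul_of_nonneg_left (rpow_norm_sub_two_mul_inner_le p a b) (by positivity)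
  have young := Real.mul_mul_rpow_sub_one_le hp (norm_nonneg a) (mul_nonneg ht hb)
  rw [Real.mul_rpow ht hb, Real.mul_rpow ht hb] at young
  linarith

/-- Pointwise nonnegativity `L(u,v) ≥ 0` of Picone's identity for the `p`-Laplacian. -/
theorem picone_nonneg (p : ℝ) (hp : 1 < p) (n : ℕ)
    (a b : EuclideanSpace ℝ (Fin n)) (u v : ℝ) (hu : 0 ≤ u) (hv : 0 < v) :
    0 ≤ ‖a‖ ^ p - p * (u ^ (p - 1) / v ^ (p - 1)) * (‖b‖ ^ (p - 2) * (inner ℝ a b : ℝ))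
        + (p - 1) * (u ^ p / v ^ p) * ‖b‖ ^ p := by
  rw [← Real.div_rpow hu hv.le, ← Real.div_rpow hu hv.le]
  exact picone_inner_nonneg hp (div_nonneg hu hv.le) a b
end

section
/- Let N be a natural number and p, λ real numbers with 1 < p < N and λ > 0. Let φ, g : ℝ → ℝ with φ continuously differentiable on [1,∞), φ(r) > 0 for all r ≥ 1, g(r) > 0 for all r > 1, F satisfying the radial eigenvalue ODE on (1,∞), φ'(1) > 0, and φ(r) → 0 as r → ∞. Then there exists a unique r_* ∈ (1,∞) with φ'(r_*) = 0; moreover φ'(r) > 0 for all r ∈ [1, r_*) and φ'(r) < 0 for all r > r_*. -/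
open Real Set Filter
open Topology

/-- The radial quantity `F(r) = r^(N-1) |φ'(r)|^(p-2) φ'(r)`, written with
real exponents via the sign function. -/
noncomputable def radialF (N : ℕ) (p : ℝ) (φ : ℝ → ℝ) (r : ℝ) : ℝ :=
  r ^ ((N : ℝ) - 1) * Real.sign (deriv φ r) * |deriv φ r| ^ (p - 1)

lemma radialF_pos_of {N : ℕ} {p : ℝ} {φ : ℝ → ℝ} {r : ℝ} (hr : 0 < r)
    (hd : 0 < deriv φ r) : 0 < radialF N p φ r := by
  unfold radialF
  rw [Real.sign_of_pos hd]
  have h1 : (0:ℝ) < r ^ ((N:ℝ)-1) := Real.rpow_pos_of_pos hr _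
  have h2 : (0:ℝ) < |deriv φ r| ^ (p-1) :=
    Real.rpow_pos_of_pos (abs_pos.mpr hd.ne') _
  nlinarith

lemma radialF_neg_of {N : ℕ} {p : ℝ} {φ : ℝ → ℝ} {r : ℝ} (hr : 0 < r)
    (hd : deriv φ r < 0) : radialF N p φ r < 0 := by
  unfold radialF
  rw [Real.sign_of_neg hd]
  have h1 : (0:ℝ) < r ^ ((N:ℝ)-1) := Real.rpow_pos_of_pos hr _
  have h2 : (0:ℝ) < |deriv φ r| ^ (p-1) :=
    Real.rpow_pos_of_pos (abs_pos.mpr hd.ne) _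
  nlinarith

lemma radialF_zero_of {N : ℕ} {p : ℝ} {φ : ℝ → ℝ} {r : ℝ}
    (hd : deriv φ r = 0) : radialF N p φ r = 0 := by
  unfold radialF
  rw [hd, Real.sign_zero]
  ring

lemma deriv_pos_of_radialF_pos {N : ℕ} {p : ℝ} {φ : ℝ → ℝ} {r : ℝ} (hr : 0 < r)
    (h : 0 < radialF N p φ r) : 0 < deriv φ r := by
  rcases lt_trichotomy (deriv φ r) 0 with h1 | h1 | h1
  · exact absurd (radialF_neg_of hr h1) (by linarith)
  · exact absurd (radialF_zero_of (N := N) (p := p) h1) (by linarith)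
  · exact h1

lemma deriv_neg_of_radialF_neg {N : ℕ} {p : ℝ} {φ : ℝ → ℝ} {r : ℝ} (hr : 0 < r)
    (h : radialF N p φ r < 0) : deriv φ r < 0 := by
  rcases lt_trichotomy (deriv φ r) 0 with h1 | h1 | h1
  · exact h1
  · exact absurd (radialF_zero_of (N := N) (p := p) h1) (by linarith)
  · exact absurd (radialF_pos_of hr h1) (by linarith)

lemma deriv_zero_of_radialF_zero {N : ℕ} {p : ℝ} {φ : ℝ → ℝ} {r : ℝ} (hr : 0 < r)
    (h : radialF N p φ r = 0) : deriv φ r = 0 := by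
  rcases lt_trichotomy (deriv φ r) 0 with h1 | h1 | h1
  · exact absurd (radialF_neg_of hr h1) (by linarith)
  · exact h1
  · exact absurd (radialF_pos_of hr h1) (by linarith)

/-- Existence, uniqueness, and sign structure of the critical point of the
radial principal eigenfunction (Theorem 1.3(b), first part). -/
theorem critical_point_exists_unique (N : ℕ) (p lam : ℝ)
    (hp : 1 < p) (hpN : p < N) (hlam : 0 < lam)
    (φ g : ℝ → ℝ)
    (hφdiff : ∀ r ≥ (1 : ℝ), DifferentiableAt ℝ φ r)
    (hφC1 : ContinuousOn (deriv φ) (Set.Ici 1))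
    (hφpos : ∀ r ≥ (1 : ℝ), 0 < φ r)
    (hgpos : ∀ r > (1 : ℝ), 0 < g r)
    (hODE : ∀ r > (1 : ℝ),
      HasDerivAt (radialF N p φ) (-(lam * r ^ ((N : ℝ) - 1) * g r * φ r ^ (p - 1))) r)
    (hφ'1 : 0 < deriv φ 1)
    (hφlim : Tendsto φ atTop (nhds 0)) :
    ∃ rstar : ℝ, 1 < rstar ∧ deriv φ rstar = 0 ∧
      (∀ r > (1 : ℝ), deriv φ r = 0 → r = rstar) ∧
      (∀ r ∈ Set.Ico (1 : ℝ) rstar, 0 < deriv φ r) ∧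
      (∀ r > rstar, deriv φ r < 0) := by
  set F := radialF N p φ with hFdef
  -- F is strictly decreasing on (1, ∞)
  have hFanti : StrictAntiOn F (Ioi 1) := by
    apply strictAntiOn_of_deriv_neg (convex_Ioi 1)
    · intro x hx
      exact ((hODE x hx).differentiableAt).continuousAt.continuousWithinAt
    · intro x hx
      rw [interior_Ioi] at hx
      rw [(hODE x hx).deriv]
      have hx0 : (0:ℝ) < x := lt_trans one_pos hx
      have h1 : (0:ℝ) < x ^ ((N:ℝ)-1) := Real.rpow_pos_of_pos hx0 _
      have h2 : (0:ℝ) < φ x ^ (p-1) :=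
        Real.rpow_pos_of_pos (hφpos x hx.le) _
      have h3 := hgpos x hx
      have : 0 < lam * x ^ ((N:ℝ)-1) * g x * φ x ^ (p-1) := by positivity
      linarith
  -- there exists a point where F is ≤ 0
  have hex : ∃ r₀, 1 < r₀ ∧ F r₀ ≤ 0 := by
    by_contra h
    push_neg at h
    have hd : ∀ r > (1:ℝ), 0 < deriv φ r := fun r hr =>
      deriv_pos_of_radialF_pos (lt_trans one_pos hr) (h r hr)
    have hmono : StrictMonoOn φ (Ici 2) := by
      apply strictMonoOn_of_deriv_pos (convex_Ici 2)
      · intro x hx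
        exact (hφdiff x (by simpa using le_trans one_le_two hx)).continuousAt.continuousWithinAt
      · intro x hx
        rw [interior_Ici] at hx
        exact hd x (by linarith [mem_Ioi.mp hx])
    have hle : φ 2 ≤ 0 := by
      apply ge_of_tendsto hφlim
      filter_upwards [eventually_ge_atTop (3:ℝ)] with r hr
      exact (hmono (by norm_num) (by simp; linarith) (by linarith)).le
    linarith [hφpos 2 (by norm_num)]
  obtain ⟨r₀, hr₀, hFr₀⟩ := hex
  -- find s ∈ (1, r₀) with deriv φ s > 0
  have hs : ∃ s, s ∈ Ioo (1:ℝ) r₀ ∧ 0 < deriv φ s := by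
    have hc : ContinuousWithinAt (deriv φ) (Ici 1) 1 := hφC1 1 (by norm_num)
    have hev : ∀ᶠ x in 𝓝[Ici (1:ℝ)] 1, 0 < deriv φ x :=
      hc (Ioi_mem_nhds hφ'1)
    have hev' : ∀ᶠ x in 𝓝[Ioi (1:ℝ)] 1, 0 < deriv φ x :=
      hev.filter_mono (nhdsWithin_mono 1 Ioi_subset_Ici_self)
    have hmem : ∀ᶠ x in 𝓝[Ioi (1:ℝ)] 1, x ∈ Ioo (1:ℝ) r₀ :=
      Ioo_mem_nhdsGT_of_mem ⟨le_rfl, hr₀⟩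
    obtain ⟨s, hs1, hs2⟩ := (hmem.and hev').exists
    exact ⟨s, hs1, hs2⟩
  obtain ⟨s, hsI, hs'⟩ := hs
  have hs1 : (1:ℝ) < s := hsI.1
  have hFs : 0 < F s := radialF_pos_of (lt_trans one_pos hs1) hs'
  -- IVT gives a zero of F
  have hcont : ContinuousOn F (Icc s r₀) := fun x hx =>
    ((hODE x (lt_of_lt_of_le hs1 hx.1)).differentiableAt).continuousAt.continuousWithinAt
  have hiv := intermediate_value_Icc' hsI.2.le hcont
  obtain ⟨rstar, hrsI, hFrs⟩ := hiv ⟨hFr₀, hFs.le⟩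
  have hrstar1 : (1:ℝ) < rstar := lt_of_lt_of_le hs1 hrsI.1
  have hrstar0 : (0:ℝ) < rstar := lt_trans one_pos hrstar1
  have hdrs : deriv φ rstar = 0 := deriv_zero_of_radialF_zero hrstar0 hFrs
  refine ⟨rstar, hrstar1, hdrs, ?_, ?_, ?_⟩
  · -- uniqueness
    intro r hr hdr
    have hFr : F r = 0 := radialF_zero_of hdr
    exact hFanti.injOn (mem_Ioi.mpr hr) (mem_Ioi.mpr hrstar1) (by rw [hFr, hFrs])
  · -- positive on [1, rstar)
    intro r hr
    rcases eq_or_lt_of_le hr.1 with h1 | h1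
    · rwa [← h1]
    · have : F rstar < F r := hFanti (mem_Ioi.mpr h1) (mem_Ioi.mpr hrstar1) hr.2
      rw [hFrs] at this
      exact deriv_pos_of_radialF_pos (lt_trans one_pos h1) this
  · -- negative beyond rstar
    intro r hr
    have : F r < F rstar := hFanti (mem_Ioi.mpr hrstar1) (mem_Ioi.mpr (lt_trans hrstar1 hr)) hr
    rw [hFrs] at this
    exact deriv_neg_of_radialF_neg (lt_trans one_pos (lt_trans hrstar1 hr)) this
end

section
/- Let N be a natural number and p, λ real numbers with 1 < p < N and λ > 0. Let φ, g : ℝ → ℝ with φ continuously differentiable on [1,∞), φ(r) > 0 for all r ≥ 1, g continuous on [1,∞) with g(r) > 0 for all r ≥ 1, F satisfying the radial eigenvalue ODE on (1,∞), and let r_* > 1 satisfy φ'(r_*) = 0. Then for every r > r_*: φ'(r) < 0 and r^(N−1)·|φ'(r)|^(p−1) = λ·∫_{r_*}^{r} s^(N−1)·g(s)·φ(s)^(p−1) ds. -/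
open Real Set MeasureTheory intervalIntegral

/-- The integrated identity (3.2): beyond the critical point `r_*`,
`r^(N-1)|φ'(r)|^(p-1) = λ ∫_{r_*}^r s^(N-1) g(s) φ(s)^(p-1) ds` and `φ' < 0`. -/
theorem integrated_identity (N : ℕ) (p lam : ℝ)
    (hp : 1 < p) (hpN : p < N) (hlam : 0 < lam)
    (φ g : ℝ → ℝ)
    (hφdiff : ∀ r ≥ (1 : ℝ), DifferentiableAt ℝ φ r)
    (hφC1 : ContinuousOn (deriv φ) (Set.Ici 1))
    (hφpos : ∀ r ≥ (1 : ℝ), 0 < φ r)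
    (hgcont : ContinuousOn g (Set.Ici 1))
    (hgpos : ∀ r ≥ (1 : ℝ), 0 < g r)
    (hODE : ∀ r > (1 : ℝ),
      HasDerivAt (radialF N p φ) (-(lam * r ^ ((N : ℝ) - 1) * g r * φ r ^ (p - 1))) r)
    (rstar : ℝ) (hrstar : 1 < rstar) (hcrit : deriv φ rstar = 0) :
    ∀ r > rstar, deriv φ r < 0 ∧
      r ^ ((N : ℝ) - 1) * |deriv φ r| ^ (p - 1) =
        lam * ∫ s in rstar..r, s ^ ((N : ℝ) - 1) * g s * φ s ^ (p - 1) := by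
  intro r hr
  have h1r : (1 : ℝ) < r := lt_trans hrstar hr
  -- continuity of the integrand on [rstar, r]
  have hsub : Set.Icc rstar r ⊆ Set.Ici (1 : ℝ) := fun x hx => le_of_lt (lt_of_lt_of_le hrstar hx.1)
  have hφcont : ContinuousOn φ (Set.Ici 1) := fun x hx =>
    (hφdiff x hx).continuousAt.continuousWithinAt
  have hIcont : ContinuousOn (fun s => s ^ ((N : ℝ) - 1) * g s * φ s ^ (p - 1))
      (Set.Icc rstar r) := by
    apply ContinuousOn.mul
    · apply ContinuousOn.mul
      · exact (continuousOn_id.rpow_const (fun x hx => Or.inl (by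
          have : (1:ℝ) ≤ x := hsub hx
          exact ne_of_gt (lt_of_lt_of_le zero_lt_one this))))
      · exact hgcont.mono hsub
    · exact ((hφcont.mono hsub).rpow_const (fun x hx =>
        Or.inl (ne_of_gt (hφpos x (hsub hx)))))
  have hInt : IntervalIntegrable (fun s => s ^ ((N : ℝ) - 1) * g s * φ s ^ (p - 1))
      MeasureTheory.volume rstar r := by
    apply ContinuousOn.intervalIntegrable
    rwa [Set.uIcc_of_le (le_of_lt hr)]
  -- FTC
  have hftc : ∫ s in rstar..r, -(lam * s ^ ((N : ℝ) - 1) * g s * φ s ^ (p - 1)) =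
      radialF N p φ r - radialF N p φ rstar := by
    apply intervalIntegral.integral_eq_sub_of_hasDerivAt
    · intro x hx
      rw [Set.uIcc_of_le (le_of_lt hr)] at hx
      exact hODE x (lt_of_lt_of_le hrstar hx.1)
    · have : (fun s => -(lam * s ^ ((N : ℝ) - 1) * g s * φ s ^ (p - 1))) =
          (fun s => -(lam * (s ^ ((N : ℝ) - 1) * g s * φ s ^ (p - 1)))) := by
        funext s; ring
      rw [this]
      exact (hInt.const_mul lam).neg
  have hFstar : radialF N p φ rstar = 0 := by
    simp [radialF, hcrit]
  have hintrw : ∫ s in rstar..r, -(lam * s ^ ((N : ℝ) - 1) * g s * φ s ^ (p - 1)) =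
      -(lam * ∫ s in rstar..r, s ^ ((N : ℝ) - 1) * g s * φ s ^ (p - 1)) := by
    have : (fun s => -(lam * s ^ ((N : ℝ) - 1) * g s * φ s ^ (p - 1))) =
        (fun s => -(lam * (s ^ ((N : ℝ) - 1) * g s * φ s ^ (p - 1)))) := by
      funext s; ring
    rw [this, intervalIntegral.integral_neg, intervalIntegral.integral_const_mul]
  have hFr : radialF N p φ r =
      -(lam * ∫ s in rstar..r, s ^ ((N : ℝ) - 1) * g s * φ s ^ (p - 1)) := by
    rw [← hintrw, hftc, hFstar, sub_zero]
  -- positivity of the integral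
  have hipos : 0 < ∫ s in rstar..r, s ^ ((N : ℝ) - 1) * g s * φ s ^ (p - 1) := by
    apply intervalIntegral.intervalIntegral_pos_of_pos_on hInt
    · intro x hx
      have hx1 : (1:ℝ) ≤ x := le_of_lt (lt_trans hrstar hx.1)
      have hx0 : (0:ℝ) < x := lt_of_lt_of_le zero_lt_one hx1
      have hg := hgpos x hx1
      have hf := hφpos x hx1
      positivity
    · exact hr
  have hFneg : radialF N p φ r < 0 := by
    rw [hFr]; nlinarith
  -- deduce deriv φ r < 0
  have hrpow : (0:ℝ) < r ^ ((N : ℝ) - 1) :=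
    Real.rpow_pos_of_pos (lt_trans zero_lt_one h1r) _
  have hderneg : deriv φ r < 0 := by
    rcases lt_trichotomy (deriv φ r) 0 with h | h | h
    · exact h
    · exfalso; rw [radialF, h] at hFneg; simp at hFneg
    · exfalso
      rw [radialF, Real.sign_of_pos h] at hFneg
      have : (0:ℝ) ≤ |deriv φ r| ^ (p - 1) := Real.rpow_nonneg (abs_nonneg _) _
      nlinarith
  refine ⟨hderneg, ?_⟩
  have : radialF N p φ r = -(r ^ ((N : ℝ) - 1) * |deriv φ r| ^ (p - 1)) := by
    rw [radialF, Real.sign_of_neg hderneg]; ring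
  rw [this] at hFr
  linarith
end

section
/- Let N be a natural number and p a real number with 1 < p < N. Let g : ℝ → ℝ≥0∞ be measurable. Then for every r > 1: ∫_{(1,r)} s^(p−1)·g(s) ds ≤ (∫_{(1,∞)} s^(N−1)·g(s)^(N/p) ds)^(p/N) · (log r)^((N−p)/N), where all integrals are Lebesgue integrals with values in the extended nonnegative reals ℝ≥0∞ and all real exponents are extended-real rpow. -/
open MeasureTheory Set ENNReal

/-!
Split `s ^ (p - 1) = s ^ ((N - 1) p / N) * s ^ ((p - N) / N)` and apply Hölder's inequality with
the conjugate exponents `N / p` and `N / (N - p)`. The first factor becomes the weighted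
`L^(N/p)` integral of `g`, which only grows when `(1, r)` is enlarged to `(1, ∞)`; in the second
the power of `s` is exactly `-1`, so it integrates to `log r`.
-/

theorem Real.holderConjugate_div_div_sub {p q : ℝ} (hp : 0 < p) (hpq : p < q) :
    (q / p).HolderConjugate (q / (q - p)) := by
  have hq : 0 < q := hp.trans hpq
  simpa only [one_div_div] using
    Real.holderConjugate_one_div (div_pos hp hq) (div_pos (sub_pos.2 hpq) hq) (by field_simp; ring)

theorem lintegral_ofReal_inv_Ioo {a b : ℝ} (ha : 0 < a) (hab : a ≤ b) :
    ∫⁻ s in Ioo a b, ENNReal.ofReal s⁻¹ = ENNReal.ofReal (Real.log (b / a)) := by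
  have hint : IntegrableOn (fun s : ℝ => s⁻¹) (Ioo a b) :=
    (continuousOn_inv₀.mono fun s hs => (ha.trans_le hs.1).ne').integrableOn_compact
      isCompact_Icc |>.mono_set Ioo_subset_Icc_self
  rw [← ofReal_integral_eq_lintegral_ofReal hint
      ((ae_restrict_mem measurableSet_Ioo).mono fun s hs => inv_nonneg.2 (ha.trans hs.1).le),
    ← integral_Ioc_eq_integral_Ioo, ← intervalIntegral.integral_of_le hab,
    integral_inv_of_pos ha (ha.trans_le hab)]

theorem lintegral_rpow_add_mul_le_of_holderConjugate {μ : Measure ℝ} (hμ : ∀ᵐ s ∂μ, 0 < s)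
    {P Q : ℝ} (hPQ : P.HolderConjugate Q) (a b : ℝ) {g : ℝ → ℝ≥0∞} (hg : AEMeasurable g μ) :
    ∫⁻ s, ENNReal.ofReal s ^ (a + b) * g s ∂μ ≤
      (∫⁻ s, ENNReal.ofReal s ^ (a * P) * g s ^ P ∂μ) ^ (1 / P) *
        (∫⁻ s, ENNReal.ofReal s ^ (b * Q) ∂μ) ^ (1 / Q) := by
  have hsplit : ∀ᵐ s ∂μ, ENNReal.ofReal s ^ (a + b) * g s =
      (ENNReal.ofReal s ^ a * g s) * ENNReal.ofReal s ^ b := by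
    filter_upwards [hμ] with s hs
    rw [mul_right_comm, ← ENNReal.rpow_add _ _ (by simpa using hs) ofReal_ne_top]
  calc ∫⁻ s, ENNReal.ofReal s ^ (a + b) * g s ∂μ
      = ∫⁻ s, ((fun s => ENNReal.ofReal s ^ a * g s) * fun s => ENNReal.ofReal s ^ b) s ∂μ :=
        lintegral_congr_ae hsplit
    _ ≤ (∫⁻ s, (ENNReal.ofReal s ^ a * g s) ^ P ∂μ) ^ (1 / P) *
          (∫⁻ s, (ENNReal.ofReal s ^ b) ^ Q ∂μ) ^ (1 / Q) :=
        ENNReal.lintegral_mul_le_Lp_mul_Lq μ hPQ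
          ((measurable_ofReal.pow_const a).aemeasurable.mul hg)
          (measurable_ofReal.pow_const b).aemeasurable
    _ = _ := by
        simp only [ENNReal.mul_rpow_of_nonneg _ _ hPQ.nonneg, ← ENNReal.rpow_mul]

/-- Hölder-inequality computation with conjugate exponents `N/p` and `N/(N-p)`
producing the logarithmic factor in the far-field gradient upper bound. -/
theorem holder_log_estimate (N : ℕ) (p : ℝ) (hp : 1 < p) (hpN : p < N)
    (g : ℝ → ℝ≥0∞) (hg : Measurable g) :
    ∀ r > (1 : ℝ),
      ∫⁻ s in Set.Ioo (1 : ℝ) r, ENNReal.ofReal s ^ (p - 1) * g s ≤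
        (∫⁻ s in Set.Ioi (1 : ℝ), ENNReal.ofReal s ^ ((N : ℝ) - 1) * g s ^ ((N : ℝ) / p))
            ^ (p / (N : ℝ)) *
          ENNReal.ofReal (Real.log r) ^ (((N : ℝ) - p) / (N : ℝ)) := by
  intro r hr
  have hp0 : 0 < p := one_pos.trans hp
  have hN : (N : ℝ) ≠ 0 := (hp0.trans hpN).ne'
  have hholder := lintegral_rpow_add_mul_le_of_holderConjugate
    (μ := volume.restrict (Ioo (1 : ℝ) r))
    ((ae_restrict_mem measurableSet_Ioo).mono fun s hs => one_pos.trans hs.1)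
    (Real.holderConjugate_div_div_sub hp0 hpN) ((N - 1) * p / N) ((p - N) / N) hg.aemeasurable
  have hsum : (N - 1) * p / N + (p - N) / N = p - 1 := by field_simp; ring
  have hfirst : (N - 1) * p / N * (N / p) = N - 1 := by field_simp
  have hsecond : (p - N) / N * (N / (N - p)) = -1 := by
    field_simp [sub_ne_zero.2 hpN.ne']; ring
  rw [hsum, hfirst, hsecond, one_div_div, one_div_div] at hholder
  have hlog : ∫⁻ s in Ioo 1 r, ENNReal.ofReal s ^ (-1 : ℝ) = ENNReal.ofReal (Real.log r) :=
    calc ∫⁻ s in Ioo 1 r, ENNReal.ofReal s ^ (-1 : ℝ)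
        = ∫⁻ s in Ioo 1 r, ENNReal.ofReal s⁻¹ :=
          setLIntegral_congr_fun measurableSet_Ioo fun s (hs : 1 < s ∧ s < r) => by
            rw [ENNReal.rpow_neg_one, ENNReal.ofReal_inv_of_pos (one_pos.trans hs.1)]
      _ = ENNReal.ofReal (Real.log r) := by rw [lintegral_ofReal_inv_Ioo one_pos hr.le, div_one]
  rw [hlog] at hholder
  exact hholder.trans (by gcongr; exact Ioo_subset_Ioi_self)
end

section
/- Let N be a natural number and p, λ real numbers with 1 < p < N and λ > 0. Let r_* > 1 and C₂ > 0. Let φ, g : ℝ → ℝ with φ differentiable on (r_*,∞), g continuous and nonnegative on [1,∞), 0 ≤ φ(s) ≤ C₂·s^(−(N−p)/(p−1)) for all s ≥ r_*, and suppose A := (∫_1^∞ s^(N−1)·g(s)^(N/p) ds)^(p/N) is finite. If for every r > r_* one has r^(N−1)·|φ'(r)|^(p−1) = λ·∫_{r_*}^{r} s^(N−1)·g(s)·φ(s)^(p−1) ds, then for every r > r_*: |φ'(r)| ≤ (λ·C₂^(p−1)·A)^(1/(p−1)) · (log r)^((N−p)/(N(p−1))) · r^(−(N−1)/(p−1)).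 -/
/-!
The decay `φ(s) ≤ C₂ s^(-(N-p)/(p-1))` turns the identity into
`r^(N-1) |φ'(r)|^(p-1) ≤ λ C₂^(p-1) ∫_{r_*}^r s^(p-1) g(s) ds`. Writing
`s^(p-1) g(s) = (s^((N-1)p/N) g(s)) · s^(-(N-p)/N)` and applying Hölder with exponents `N/p`
and `N/(N-p)`, the first factor contributes `A` and the second `(∫_{r_*}^r ds/s)^((N-p)/N)`,
which is at most `(log r)^((N-p)/N)`. Taking `(p-1)`-th roots gives the bound.
-/

open Real Set MeasureTheory intervalIntegral

open scoped ENNReal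

lemma ContinuousOn.memLp_restrict_Ioc {f : ℝ → ℝ} {a b : ℝ} (hf : ContinuousOn f (Icc a b))
    (q : ℝ≥0∞) : MemLp f q (volume.restrict (Ioc a b)) := by
  obtain ⟨C, hC⟩ := isCompact_Icc.exists_bound_of_continuousOn hf
  refine .of_bound ((hf.mono Ioc_subset_Icc_self).aestronglyMeasurable measurableSet_Ioc) C ?_
  exact (ae_restrict_iff' measurableSet_Ioc).2
    (ae_of_all _ fun s hs => hC s (Ioc_subset_Icc_self hs))

lemma setIntegral_Ioc_mul_le_Lp_mul_Lq {f g : ℝ → ℝ} {a b P Q : ℝ} (hPQ : P.HolderConjugate Q)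
    (hf : ContinuousOn f (Icc a b)) (hg : ContinuousOn g (Icc a b))
    (hf0 : ∀ s ∈ Ioc a b, 0 ≤ f s) (hg0 : ∀ s ∈ Ioc a b, 0 ≤ g s) :
    ∫ s in Ioc a b, f s * g s ≤
      (∫ s in Ioc a b, f s ^ P) ^ (1 / P) * (∫ s in Ioc a b, g s ^ Q) ^ (1 / Q) :=
  integral_mul_le_Lp_mul_Lq_of_nonneg hPQ
    ((ae_restrict_iff' measurableSet_Ioc).2 (ae_of_all _ hf0))
    ((ae_restrict_iff' measurableSet_Ioc).2 (ae_of_all _ hg0))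
    (hf.memLp_restrict_Ioc _) (hg.memLp_restrict_Ioc _)

lemma setIntegral_Ioc_inv {a b : ℝ} (ha : 0 < a) (hab : a ≤ b) :
    ∫ s in Ioc a b, s⁻¹ = log b - log a := by
  rw [← integral_of_le hab, integral_inv_of_pos ha (ha.trans_le hab),
    log_div (ha.trans_le hab).ne' ha.ne']

lemma setIntegral_Ioc_rpow_sub_one_mul_le {N p a b : ℝ} {g : ℝ → ℝ} (hp : 0 < p) (hpN : p < N)
    (ha : 0 < a) (hab : a ≤ b) (hg : ContinuousOn g (Icc a b))
    (hg0 : ∀ s ∈ Ioc a b, 0 ≤ g s) :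
    ∫ s in Ioc a b, s ^ (p - 1) * g s ≤
      (∫ s in Ioc a b, s ^ (N - 1) * g s ^ (N / p)) ^ (p / N) *
        (log b - log a) ^ ((N - p) / N) := by
  have hN : 0 < N := hp.trans hpN
  have hNp : 0 < N - p := sub_pos.2 hpN
  have hconj : (N / p).HolderConjugate (N / (N - p)) := by
    rw [Real.holderConjugate_iff, inv_div, inv_div, ← add_div, add_sub_cancel, div_self hN.ne']
    exact ⟨(one_lt_div hp).2 hpN, rfl⟩
  have hpos : ∀ s ∈ Icc a b, 0 < s := fun s hs => ha.trans_le hs.1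
  have hrpow : ∀ e : ℝ, ContinuousOn (fun s : ℝ => s ^ e) (Icc a b) := fun e =>
    continuousOn_id.rpow_const fun s hs => Or.inl (hpos s hs).ne'
  have holder := setIntegral_Ioc_mul_le_Lp_mul_Lq (f := fun s => s ^ ((N - 1) * p / N) * g s)
    hconj ((hrpow _).mul hg) (hrpow (-(N - p) / N))
    (fun s hs => mul_nonneg (rpow_nonneg (hpos s (Ioc_subset_Icc_self hs)).le _) (hg0 s hs))
    (fun s hs => rpow_nonneg (hpos s (Ioc_subset_Icc_self hs)).le _)
  rw [one_div_div, one_div_div] at holder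
  calc ∫ s in Ioc a b, s ^ (p - 1) * g s
      = ∫ s in Ioc a b, s ^ ((N - 1) * p / N) * g s * s ^ (-(N - p) / N) := by
        refine setIntegral_congr_fun measurableSet_Ioc fun s hs => ?_
        have hs := hpos s (Ioc_subset_Icc_self hs)
        rw [mul_right_comm, ← rpow_add hs]
        congr 2
        field_simp
        ring
    _ ≤ _ := holder
    _ = _ := by
        congr 2
        · refine setIntegral_congr_fun measurableSet_Ioc fun s hs => ?_
          have hs' := hpos s (Ioc_subset_Icc_self hs)
          rw [mul_rpow (rpow_nonneg hs'.le _) (hg0 s hs), ← rpow_mul hs'.le]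
          congr 2
          field_simp
        · rw [← setIntegral_Ioc_inv ha hab]
          refine setIntegral_congr_fun measurableSet_Ioc fun s hs => ?_
          have hs' := hpos s (Ioc_subset_Icc_self hs)
          rw [← rpow_mul hs'.le, div_mul_div_cancel₀ hN.ne', neg_div_self hNp.ne', rpow_neg_one]

lemma setIntegral_Ioc_rpow_sub_one_mul_le_log {N p a b : ℝ} {g : ℝ → ℝ} (hp : 0 < p)
    (hpN : p < N) (ha : 1 ≤ a) (hab : a ≤ b) (hg : ContinuousOn g (Icc a b))
    (hg0 : ∀ s ≥ (1 : ℝ), 0 ≤ g s)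
    (hA : IntegrableOn (fun s : ℝ => s ^ (N - 1) * g s ^ (N / p)) (Ioi 1)) :
    ∫ s in Ioc a b, s ^ (p - 1) * g s ≤
      (∫ s in Ioi (1 : ℝ), s ^ (N - 1) * g s ^ (N / p)) ^ (p / N) *
        log b ^ ((N - p) / N) := by
  have hN : 0 < N := hp.trans hpN
  have hnonneg : ∀ s ∈ Ioi (1 : ℝ), 0 ≤ s ^ (N - 1) * g s ^ (N / p) := fun s hs =>
    mul_nonneg (rpow_nonneg (zero_le_one.trans hs.le) _) (rpow_nonneg (hg0 s hs.le) _)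
  have hsub : Ioc a b ⊆ Ioi 1 := fun s hs => ha.trans_lt hs.1
  have hlog : 0 ≤ log b - log a := sub_nonneg.2 (log_le_log (zero_lt_one.trans_le ha) hab)
  refine (setIntegral_Ioc_rpow_sub_one_mul_le hp hpN (zero_lt_one.trans_le ha) hab hg
    fun s hs => hg0 s (hsub hs).le).trans ?_
  refine mul_le_mul (rpow_le_rpow ?_ ?_ (div_nonneg hp.le hN.le))
    (rpow_le_rpow ?_ ?_ (div_nonneg (sub_pos.2 hpN).le hN.le))
    (rpow_nonneg hlog _)
    (rpow_nonneg (setIntegral_nonneg measurableSet_Ioi hnonneg) _)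
  · exact setIntegral_nonneg measurableSet_Ioc fun s hs => hnonneg s (hsub hs)
  · exact setIntegral_mono_set hA ((ae_restrict_iff' measurableSet_Ioi).2 (ae_of_all _ hnonneg))
      hsub.eventuallyLE
  · exact hlog
  · linarith [log_nonneg ha]

lemma rpow_le_mul_rpow_of_le_mul_rpow_div {x C s q e : ℝ} (hx : 0 ≤ x) (hC : 0 ≤ C)
    (hs : 0 < s) (hq : 0 < q) (h : x ≤ C * s ^ (e / q)) : x ^ q ≤ C ^ q * s ^ e := by
  calc x ^ q ≤ (C * s ^ (e / q)) ^ q := rpow_le_rpow hx h hq.le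
    _ = C ^ q * s ^ e := by
      rw [mul_rpow hC (rpow_nonneg hs.le _), ← rpow_mul hs.le, div_mul_cancel₀ e hq.ne']

lemma intervalIntegral_rpow_mul_rpow_le {N p C a b : ℝ} {g φ : ℝ → ℝ} (hp : 1 < p)
    (hC : 0 ≤ C) (ha : 0 < a) (hab : a ≤ b) (hg : ContinuousOn g (Icc a b))
    (hg0 : ∀ s ∈ Ioc a b, 0 ≤ g s)
    (hφ : ∀ s ∈ Ioc a b, 0 ≤ φ s ∧ φ s ≤ C * s ^ (-(N - p) / (p - 1))) :
    ∫ s in a..b, s ^ (N - 1) * g s * φ s ^ (p - 1) ≤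
      C ^ (p - 1) * ∫ s in Ioc a b, s ^ (p - 1) * g s := by
  have hpos : ∀ s ∈ Icc a b, 0 < s := fun s hs => ha.trans_le hs.1
  rw [integral_of_le hab, ← MeasureTheory.integral_const_mul]
  refine integral_mono_of_nonneg ?_ ?_ ?_
  · refine (ae_restrict_iff' measurableSet_Ioc).2 (ae_of_all _ fun s hs => ?_)
    have hs' := hpos s (Ioc_subset_Icc_self hs)
    exact mul_nonneg (mul_nonneg (rpow_nonneg hs'.le _) (hg0 s hs))
      (rpow_nonneg (hφ s hs).1 _)
  · refine (ContinuousOn.integrableOn_Icc ?_).mono_set Ioc_subset_Icc_self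
    exact continuousOn_const.mul
      ((continuousOn_id.rpow_const fun s hs => Or.inl (hpos s hs).ne').mul hg)
  · refine (ae_restrict_iff' measurableSet_Ioc).2 (ae_of_all _ fun s hs => ?_)
    have hs' := hpos s (Ioc_subset_Icc_self hs)
    have hφs := rpow_le_mul_rpow_of_le_mul_rpow_div (hφ s hs).1 hC hs' (sub_pos.2 hp) (hφ s hs).2
    calc s ^ (N - 1) * g s * φ s ^ (p - 1)
        ≤ s ^ (N - 1) * g s * (C ^ (p - 1) * s ^ (-(N - p))) := by
          gcongr
          exact mul_nonneg (rpow_nonneg hs'.le _) (hg0 s hs)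
      _ = C ^ (p - 1) * (s ^ (p - 1) * g s) := by
          rw [show p - 1 = (N - 1) + -(N - p) by ring, rpow_add hs']
          ring

lemma le_of_rpow_mul_rpow_le {x r B L q a e : ℝ} (hx : 0 ≤ x) (hr : 0 < r) (hB : 0 ≤ B)
    (hL : 0 ≤ L) (hq : 0 < q) (h : r ^ a * x ^ q ≤ B * L ^ e) :
    x ≤ B ^ (1 / q) * L ^ (e / q) * r ^ (-a / q) := by
  have hxq : x ^ q ≤ B * L ^ e * r ^ (-a) := by
    rwa [rpow_neg hr.le, ← div_eq_mul_inv, le_div_iff₀ (rpow_pos_of_pos hr a), mul_comm]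
  calc x = (x ^ q) ^ (1 / q) := by rw [← rpow_mul hx, mul_one_div_cancel hq.ne', rpow_one]
    _ ≤ (B * L ^ e * r ^ (-a)) ^ (1 / q) := rpow_le_rpow (rpow_nonneg hx _) hxq (by positivity)
    _ = B ^ (1 / q) * L ^ (e / q) * r ^ (-a / q) := by
      rw [mul_rpow (by positivity) (by positivity), mul_rpow hB (by positivity),
        ← rpow_mul hL, ← rpow_mul hr.le, mul_one_div, mul_one_div]

theorem farfield_gradient_upper_general (N : ℕ) (p lam : ℝ)
    (hp : 1 < p) (hpN : p < N) (hlam : 0 < lam)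
    (rstar : ℝ) (hrstar : 1 < rstar) (C₂ : ℝ) (hC₂ : 0 < C₂)
    (φ g : ℝ → ℝ)
    (hgcont : ContinuousOn g (Set.Ici 1))
    (hgnonneg : ∀ s ≥ (1 : ℝ), 0 ≤ g s)
    (hφbound : ∀ s ≥ rstar, 0 ≤ φ s ∧ φ s ≤ C₂ * s ^ (-((N : ℝ) - p) / (p - 1)))
    (hA : IntegrableOn (fun s : ℝ => s ^ ((N : ℝ) - 1) * g s ^ ((N : ℝ) / p)) (Set.Ioi 1))
    (hidentity : ∀ r > rstar,
      r ^ ((N : ℝ) - 1) * |deriv φ r| ^ (p - 1) =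
        lam * ∫ s in rstar..r, s ^ ((N : ℝ) - 1) * g s * φ s ^ (p - 1)) :
    ∀ r > rstar,
      |deriv φ r| ≤
        (lam * C₂ ^ (p - 1) *
            (∫ s in Set.Ioi (1 : ℝ), s ^ ((N : ℝ) - 1) * g s ^ ((N : ℝ) / p)) ^ (p / (N : ℝ)))
          ^ (1 / (p - 1)) *
          Real.log r ^ (((N : ℝ) - p) / ((N : ℝ) * (p - 1))) *
          r ^ (-((N : ℝ) - 1) / (p - 1)) := by
  intro r hr
  set A := ∫ s in Ioi (1 : ℝ), s ^ ((N : ℝ) - 1) * g s ^ ((N : ℝ) / p)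
  have hA0 : 0 ≤ A := setIntegral_nonneg measurableSet_Ioi fun s hs =>
    mul_nonneg (rpow_nonneg (zero_le_one.trans hs.le) _) (rpow_nonneg (hgnonneg s hs.le) _)
  have hg : ContinuousOn g (Icc rstar r) := hgcont.mono fun s hs => (hrstar.trans_le hs.1).le
  have key : r ^ ((N : ℝ) - 1) * |deriv φ r| ^ (p - 1) ≤
      lam * C₂ ^ (p - 1) * A ^ (p / (N : ℝ)) * log r ^ (((N : ℝ) - p) / N) := by
    rw [hidentity r hr, mul_assoc, mul_assoc]
    gcongr lam * ?_
    refine (intervalIntegral_rpow_mul_rpow_le hp hC₂.le (by linarith) hr.le hg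
      (fun s hs => hgnonneg s (hrstar.trans hs.1).le) fun s hs => hφbound s hs.1.le).trans ?_
    gcongr
    exact setIntegral_Ioc_rpow_sub_one_mul_le_log (by linarith) hpN hrstar.le hr.le hg hgnonneg hA
  simpa only [div_div] using le_of_rpow_mul_rpow_le (abs_nonneg _) (by linarith)
    (by positivity) (log_nonneg (hrstar.trans hr).le) (sub_pos.2 hp) key

/-- Far-field gradient upper bound of Theorem 1.3(b), with logarithmic
correction coming from the `L^{N/p}` structure of the weight. -/
theorem farfield_gradient_upper (N : ℕ) (p lam : ℝ)
    (hp : 1 < p) (hpN : p < N) (hlam : 0 < lam)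
    (rstar : ℝ) (hrstar : 1 < rstar) (C₂ : ℝ) (hC₂ : 0 < C₂)
    (φ g : ℝ → ℝ)
    (hφdiff : ∀ r > rstar, DifferentiableAt ℝ φ r)
    (hgcont : ContinuousOn g (Set.Ici 1))
    (hgnonneg : ∀ s ≥ (1 : ℝ), 0 ≤ g s)
    (hφbound : ∀ s ≥ rstar, 0 ≤ φ s ∧ φ s ≤ C₂ * s ^ (-((N : ℝ) - p) / (p - 1)))
    (hA : IntegrableOn (fun s : ℝ => s ^ ((N : ℝ) - 1) * g s ^ ((N : ℝ) / p)) (Set.Ioi 1))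
    (hidentity : ∀ r > rstar,
      r ^ ((N : ℝ) - 1) * |deriv φ r| ^ (p - 1) =
        lam * ∫ s in rstar..r, s ^ ((N : ℝ) - 1) * g s * φ s ^ (p - 1)) :
    ∀ r > rstar,
      |deriv φ r| ≤
        (lam * C₂ ^ (p - 1) *
            (∫ s in Set.Ioi (1 : ℝ), s ^ ((N : ℝ) - 1) * g s ^ ((N : ℝ) / p)) ^ (p / (N : ℝ)))
          ^ (1 / (p - 1)) *
          Real.log r ^ (((N : ℝ) - p) / ((N : ℝ) * (p - 1))) *
          r ^ (-((N : ℝ) - 1) / (p - 1)) :=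
  farfield_gradient_upper_general N p lam hp hpN hlam rstar hrstar C₂ hC₂ φ g hgcont hgnonneg
    hφbound hA hidentity
end

section
/- Let N be a natural number and p, λ real numbers with 1 < p < N and λ > 0. Let r_* > 1 and C_low > 0. Let φ, g : ℝ → ℝ with φ differentiable on (r_*,∞), g continuous on [r_*,∞) with g(s) ≥ 0 for all s ≥ r_*, φ(s) ≥ 0 for all s ≥ r_*, and φ(s) ≥ C_low·s^(−(N−p)/(p−1)) for all s ∈ [r_*, 2r_*]. Let m > 0 satisfy g(s) ≥ m for all s ∈ [r_*, 2r_*]. If for every r > r_* one has r^(N−1)·|φ'(r)|^(p−1) = λ·∫_{r_*}^{r} s^(N−1)·g(s)·φ(s)^(p−1) ds, then for every r ≥ 2r_*: |φ'(r)| ≥ Ĉ₁·r^(−(N−1)/(p−1)), where Ĉ₁ := (λ·m·C_low^(p−1)·((2r_*)^p − r_*^p)/p)^(1/(p−1)). -/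
open Real Set MeasureTheory intervalIntegral

/-- Far-field gradient lower bound of Theorem 1.3(b), with the explicit
constant from the paper's proof. -/
theorem farfield_gradient_lower (N : ℕ) (p lam : ℝ)
    (hp : 1 < p) (hpN : p < N) (hlam : 0 < lam)
    (rstar : ℝ) (hrstar : 1 < rstar) (Clow : ℝ) (hClow : 0 < Clow)
    (φ g : ℝ → ℝ)
    (hφdiff : ∀ r > rstar, DifferentiableAt ℝ φ r)
    (hgcont : ContinuousOn g (Set.Ici rstar))
    (hgnonneg : ∀ s ≥ rstar, 0 ≤ g s)
    (hφnonneg : ∀ s ≥ rstar, 0 ≤ φ s)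
    (hφlow : ∀ s ∈ Set.Icc rstar (2 * rstar),
      Clow * s ^ (-((N : ℝ) - p) / (p - 1)) ≤ φ s)
    (m : ℝ) (hm : 0 < m) (hgm : ∀ s ∈ Set.Icc rstar (2 * rstar), m ≤ g s)
    (hidentity : ∀ r > rstar,
      r ^ ((N : ℝ) - 1) * |deriv φ r| ^ (p - 1) =
        lam * ∫ s in rstar..r, s ^ ((N : ℝ) - 1) * g s * φ s ^ (p - 1)) :
    ∀ r ≥ 2 * rstar,
      (lam * m * Clow ^ (p - 1) * ((2 * rstar) ^ p - rstar ^ p) / p) ^ (1 / (p - 1)) *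
          r ^ (-((N : ℝ) - 1) / (p - 1)) ≤ |deriv φ r| := by
  intro r hr
  have hp1 : (0:ℝ) < p - 1 := by linarith
  have hrs0 : (0:ℝ) < rstar := by linarith
  have h2rs : rstar < 2 * rstar := by linarith
  have hrrs : rstar < r := lt_of_lt_of_le h2rs hr
  have hrpos : (0:ℝ) < r := lt_trans hrs0 hrrs
  set h : ℝ → ℝ := fun s => s ^ ((N:ℝ)-1) * g s * φ s ^ (p-1) with hh
  -- continuity of h on intervals strictly to the right of rstar
  have hφcont : ∀ x > rstar, ContinuousAt φ x := fun x hx => (hφdiff x hx).continuousAt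
  have hhcont : ∀ a b : ℝ, rstar < a → ContinuousOn h (Icc a b) := by
    intro a b ha
    apply ContinuousOn.mul
    · apply ContinuousOn.mul
      · intro s hs
        exact (Real.continuousAt_rpow_const s _ (Or.inl (by nlinarith [hs.1]))).continuousWithinAt
      · exact hgcont.mono (fun s hs => le_of_lt (lt_of_lt_of_le ha hs.1))
    · intro s hs
      have hs' : rstar < s := lt_of_lt_of_le ha hs.1
      exact ((Real.continuousAt_rpow_const (φ s) (p-1) (Or.inr hp1.le)).comp
        (hφcont s hs')).continuousWithinAt
  have hhnonneg : ∀ s ≥ rstar, 0 ≤ h s := by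
    intro s hs
    have hs0 : (0:ℝ) ≤ s := le_trans hrs0.le hs
    exact mul_nonneg (mul_nonneg (Real.rpow_nonneg hs0 _) (hgnonneg s hs))
      (Real.rpow_nonneg (hφnonneg s hs) _)
  by_cases hInt : IntervalIntegrable h volume rstar (2*rstar)
  · -- main case
    -- lower bound function
    set f : ℝ → ℝ := fun s => (m * Clow ^ (p-1)) * s ^ (p-1) with hf
    have hfInt : IntervalIntegrable f volume rstar (2*rstar) := by
      apply ContinuousOn.intervalIntegrable
      apply ContinuousOn.mul continuousOn_const
      rw [Set.uIcc_of_le h2rs.le]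
      intro s hs
      have hs1 : rstar ≤ s := hs.1
      exact (Real.continuousAt_rpow_const s _ (Or.inl (by nlinarith))).continuousWithinAt
    have hfh : ∀ s ∈ Icc rstar (2*rstar), f s ≤ h s := by
      intro s hs
      have hspos : (0:ℝ) < s := lt_of_lt_of_le hrs0 hs.1
      have hφs := hφlow s hs
      have hφs0 : 0 ≤ Clow * s ^ (-((N : ℝ) - p) / (p - 1)) :=
        mul_nonneg hClow.le (Real.rpow_nonneg hspos.le _)
      have hpow : (Clow * s ^ (-((N : ℝ) - p) / (p - 1))) ^ (p-1) ≤ φ s ^ (p-1) :=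
        Real.rpow_le_rpow hφs0 hφs hp1.le
      have hpow2 : (Clow * s ^ (-((N : ℝ) - p) / (p - 1))) ^ (p-1)
          = Clow ^ (p-1) * s ^ (-((N:ℝ) - p)) := by
        rw [Real.mul_rpow hClow.le (Real.rpow_nonneg hspos.le _),
          ← Real.rpow_mul hspos.le]
        congr 1
        field_simp
      have hsplit : s ^ ((N:ℝ)-1) * s ^ (-((N:ℝ)-p)) = s ^ (p-1) := by
        rw [← Real.rpow_add hspos]; congr 1; ring
      have hgs := hgm s hs
      have hterm0 : 0 ≤ Clow ^ (p-1) * s ^ (-((N:ℝ)-p)) :=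
        mul_nonneg (Real.rpow_nonneg hClow.le _) (Real.rpow_nonneg hspos.le _)
      have key : (m * Clow ^ (p-1)) * s ^ (p-1)
          ≤ s ^ ((N:ℝ)-1) * g s * φ s ^ (p-1) := by
        calc (m * Clow ^ (p-1)) * s ^ (p-1)
            = (s ^ ((N:ℝ)-1) * m) * (Clow ^ (p-1) * s ^ (-((N:ℝ)-p))) := by
              rw [← hsplit]; ring
          _ ≤ (s ^ ((N:ℝ)-1) * g s) * (Clow ^ (p-1) * s ^ (-((N:ℝ)-p))) := by
              exact mul_le_mul_of_nonneg_right
                (mul_le_mul_of_nonneg_left hgs (Real.rpow_nonneg hspos.le _)) hterm0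
          _ = (s ^ ((N:ℝ)-1) * g s) * (Clow * s ^ (-((N:ℝ)-p)/(p-1))) ^ (p-1) := by
              rw [hpow2]
          _ ≤ (s ^ ((N:ℝ)-1) * g s) * φ s ^ (p-1) := by
              exact mul_le_mul_of_nonneg_left hpow
                (mul_nonneg (Real.rpow_nonneg hspos.le _) (hgnonneg s hs.1))
          _ = s ^ ((N:ℝ)-1) * g s * φ s ^ (p-1) := by ring
      exact key
    have hIlow : (m * Clow ^ (p-1)) * (((2*rstar) ^ p - rstar ^ p)/p)
        ≤ ∫ s in rstar..(2*rstar), h s := by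
      have h1 := intervalIntegral.integral_mono_on h2rs.le hfInt hInt hfh
      have h2 : (∫ s in rstar..(2*rstar), f s)
          = (m * Clow ^ (p-1)) * (((2*rstar) ^ p - rstar ^ p)/p) := by
        have : (∫ s in rstar..(2*rstar), f s)
            = (m * Clow ^ (p-1)) * ∫ s in rstar..(2*rstar), s ^ (p-1) := by
          simp only [hf]
          rw [intervalIntegral.integral_const_mul]
        rw [this, integral_rpow (Or.inl (by linarith : (-1:ℝ) < p - 1))]
        have hpe : p - 1 + 1 = p := by ring
        rw [hpe]
      rw [← h2]; exact h1
    have hInt2 : IntervalIntegrable h volume (2*rstar) r := by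
      apply ContinuousOn.intervalIntegrable
      rw [Set.uIcc_of_le hr]
      exact hhcont _ _ h2rs
    have hadd : (∫ s in rstar..r, h s)
        = (∫ s in rstar..(2*rstar), h s) + ∫ s in (2*rstar)..r, h s :=
      (intervalIntegral.integral_add_adjacent_intervals hInt hInt2).symm
    have htail : 0 ≤ ∫ s in (2*rstar)..r, h s := by
      apply intervalIntegral.integral_nonneg hr
      intro u hu
      exact hhnonneg u (le_trans h2rs.le hu.1)
    have hIr : (m * Clow ^ (p-1)) * (((2*rstar) ^ p - rstar ^ p)/p)
        ≤ ∫ s in rstar..r, h s := by rw [hadd]; linarith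
    have hid := hidentity r hrrs
    have hA : lam * m * Clow ^ (p-1) * ((2*rstar) ^ p - rstar ^ p) / p
        ≤ r ^ ((N:ℝ)-1) * |deriv φ r| ^ (p-1) := by
      rw [hid]
      calc lam * m * Clow ^ (p-1) * ((2*rstar) ^ p - rstar ^ p) / p
          = lam * ((m * Clow ^ (p-1)) * (((2*rstar) ^ p - rstar ^ p)/p)) := by ring
        _ ≤ lam * ∫ s in rstar..r, h s := mul_le_mul_of_nonneg_left hIr hlam.le
    have hrn : (0:ℝ) < r ^ ((N:ℝ)-1) := Real.rpow_pos_of_pos hrpos _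
    have hkey : (lam * m * Clow ^ (p-1) * ((2*rstar) ^ p - rstar ^ p) / p) * r ^ (-((N:ℝ)-1))
        ≤ |deriv φ r| ^ (p-1) := by
      rw [Real.rpow_neg hrpos.le, ← div_eq_mul_inv, div_le_iff₀ hrn]
      linarith [hA, mul_comm (r ^ ((N:ℝ)-1)) (|deriv φ r| ^ (p-1))]
    have hdiffpos : 0 < (2*rstar) ^ p - rstar ^ p := by
      have := Real.rpow_lt_rpow hrs0.le h2rs (by linarith : (0:ℝ) < p)
      linarith
    have hppos : (0:ℝ) < p := by linarith
    have hAnum : 0 ≤ lam * m * Clow ^ (p-1) * ((2*rstar) ^ p - rstar ^ p) / p := by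
      have hc : (0:ℝ) ≤ Clow ^ (p-1) := Real.rpow_nonneg hClow.le _
      positivity
    have hAnn : 0 ≤ (lam * m * Clow ^ (p-1) * ((2*rstar) ^ p - rstar ^ p) / p)
        * r ^ (-((N:ℝ)-1)) :=
      mul_nonneg hAnum (Real.rpow_nonneg hrpos.le _)
    have hfin := Real.rpow_le_rpow hAnn hkey (by positivity : (0:ℝ) ≤ 1/(p-1))
    rw [← Real.rpow_mul (abs_nonneg _), mul_one_div, div_self hp1.ne', Real.rpow_one,
      Real.mul_rpow hAnum (Real.rpow_nonneg hrpos.le _),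
      ← Real.rpow_mul hrpos.le, mul_one_div] at hfin
    exact hfin
  · -- degenerate case: contradiction
    exfalso
    have hderiv0 : ∀ ρ > rstar, deriv φ ρ = 0 := by
      intro ρ hρ
      have hni : ¬ IntervalIntegrable h volume rstar ρ := by
        intro hI
        apply hInt
        by_cases hρ2 : ρ ≤ 2*rstar
        · refine hI.trans (ContinuousOn.intervalIntegrable ?_)
          rw [Set.uIcc_of_le hρ2]
          exact hhcont ρ _ hρ
        · exact hI.mono_set (by
            rw [Set.uIcc_of_le h2rs.le, Set.uIcc_of_le (by linarith : rstar ≤ ρ)]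
            exact Set.Icc_subset_Icc le_rfl (by linarith))
      have h0 := hidentity ρ hρ
      rw [intervalIntegral.integral_undef hni, mul_zero] at h0
      by_contra hne
      have habs : 0 < |deriv φ ρ| := abs_pos.mpr hne
      have h1 : 0 < ρ ^ ((N:ℝ)-1) * |deriv φ ρ| ^ (p-1) :=
        mul_pos (Real.rpow_pos_of_pos (lt_trans hrs0 hρ) _)
          (Real.rpow_pos_of_pos habs _)
      rw [h0] at h1; exact lt_irrefl 0 h1
    have hconst : ∀ s ∈ Ioc rstar (2*rstar), φ s = φ (2*rstar) := by
      intro s hs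
      have hcont : ContinuousOn φ (Icc s (2*rstar)) := by
        intro x hx
        exact (hφcont x (lt_of_lt_of_le hs.1 hx.1)).continuousWithinAt
      have hder : ∀ x ∈ Ico s (2*rstar), HasDerivWithinAt φ 0 (Ici x) x := by
        intro x hx
        have hx' : rstar < x := lt_of_lt_of_le hs.1 hx.1
        have := (hφdiff x hx').hasDerivAt
        rw [hderiv0 x hx'] at this
        exact this.hasDerivWithinAt
      have := constant_of_has_deriv_right_zero hcont hder (2*rstar)
        ⟨hs.2, le_refl _⟩
      exact this.symm
    set c := φ (2*rstar) with hc
    set k : ℝ → ℝ := fun s => s ^ ((N:ℝ)-1) * g s * c ^ (p-1) with hk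
    have hkInt : IntervalIntegrable k volume rstar (2*rstar) := by
      apply ContinuousOn.intervalIntegrable
      rw [Set.uIcc_of_le h2rs.le]
      apply ContinuousOn.mul
      · apply ContinuousOn.mul
        · intro s hs
          have hs1 : rstar ≤ s := hs.1
          exact (Real.continuousAt_rpow_const s _ (Or.inl (by nlinarith))).continuousWithinAt
        · exact hgcont.mono (fun s hs => hs.1)
      · exact continuousOn_const
    apply hInt
    rw [intervalIntegrable_iff_integrableOn_Ioc_of_le h2rs.le]
    rw [intervalIntegrable_iff_integrableOn_Ioc_of_le h2rs.le] at hkInt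
    apply hkInt.congr_fun _ measurableSet_Ioc
    intro s hs
    simp only [hk, hh]
    rw [hconst s hs]
end

section
/- Let N be a natural number and p, λ, β real numbers with 1 < p < N, λ > 0, β > 0. Let φ, g : ℝ → ℝ with φ continuously differentiable on [1,∞), φ(r) > 0 for all r ≥ 1, g continuous on [1,∞) with g(r) > 0 for all r ≥ 1, F satisfying the radial eigenvalue ODE on (1,∞), the Robin condition φ'(1) = β^(1/(p−1))·φ(1), and r_* > 1 with φ'(r_*) = 0. Then β·φ(1)^(p−1) = λ·∫_1^{r_*} s^(N−1)·g(s)·φ(s)^(p−1) ds. -/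
/-!
Integrate the ODE for `F(r) = r^(N-1) |φ'(r)|^(p-2) φ'(r)` from `1` to `r_*`: the fundamental
theorem of calculus gives `λ ∫_1^{r_*} s^(N-1) g φ^(p-1) = F(1) - F(r_*)`. The critical point
kills `F(r_*)`, and the Robin condition makes `φ'(1) > 0`, so `F(1) = φ'(1)^(p-1) = β φ(1)^(p-1)`.
-/

open Real Set MeasureTheory intervalIntegral

open Topology

theorem integral_eq_sub_of_hasDerivAt_of_continuousWithinAt_left {F f : ℝ → ℝ} {a b : ℝ}
    (hab : a ≤ b) (hFa : ContinuousWithinAt F (Ici a) a)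
    (hF : ∀ x ∈ Ioc a b, HasDerivAt F (f x) x) (hf : IntervalIntegrable f volume a b) :
    ∫ x in a..b, f x = F b - F a := by
  have hcont : ContinuousOn F (Icc a b) := by
    intro x hx
    rcases hx.1.eq_or_lt with rfl | hax
    · exact hFa.mono Icc_subset_Ici_self
    · exact (hF x ⟨hax, hx.2⟩).continuousAt.continuousWithinAt
  exact integral_eq_sub_of_hasDeriv_right_of_le hab hcont
    (fun x hx => (hF x (Ioo_subset_Ioc_self hx)).hasDerivWithinAt) hf

section radialF

variable {N : ℕ} {p : ℝ} {φ : ℝ → ℝ} {r : ℝ}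

theorem radialF_eq_zero_of_deriv_eq_zero (h : deriv φ r = 0) : radialF N p φ r = 0 := by
  simp [radialF, h]

theorem radialF_eq_of_deriv_pos (h : 0 < deriv φ r) :
    radialF N p φ r = r ^ ((N : ℝ) - 1) * deriv φ r ^ (p - 1) := by
  rw [radialF, Real.sign_of_pos h, abs_of_pos h, mul_one]

theorem continuousWithinAt_radialF_of_deriv_pos {s : Set ℝ} (hr : r ≠ 0)
    (hc : ContinuousWithinAt (deriv φ) s r) (h : 0 < deriv φ r) :
    ContinuousWithinAt (radialF N p φ) s r := by
  have hpos : ∀ᶠ x in 𝓝[s] r, 0 < deriv φ x := hc.eventually (lt_mem_nhds h)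
  have hformula : ContinuousWithinAt (fun x => x ^ ((N : ℝ) - 1) * deriv φ x ^ (p - 1)) s r :=
    ((continuousAt_id.rpow_const (Or.inl hr)).continuousWithinAt).mul
      (hc.rpow_const (Or.inl h.ne'))
  exact hformula.congr_of_eventuallyEq (hpos.mono fun x hx => radialF_eq_of_deriv_pos hx)
    (radialF_eq_of_deriv_pos h)

theorem radialF_one_of_robin {β : ℝ} (hp : p ≠ 1) (hβ : 0 < β) (hφ : 0 < φ 1)
    (hRobin : deriv φ 1 = β ^ (1 / (p - 1)) * φ 1) :
    radialF N p φ 1 = β * φ 1 ^ (p - 1) := by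
  have hβ' : 0 < β ^ (1 / (p - 1)) := rpow_pos_of_pos hβ _
  rw [radialF_eq_of_deriv_pos (hRobin ▸ mul_pos hβ' hφ), one_rpow, one_mul, hRobin,
    mul_rpow hβ'.le hφ.le, ← rpow_mul hβ.le, one_div_mul_cancel (sub_ne_zero.2 hp), rpow_one]

end radialF

theorem fundamental_identity_general (N : ℕ) (p lam β : ℝ)
    (hp : 1 < p) (hβ : 0 < β)
    (φ g : ℝ → ℝ)
    (hφdiff : ∀ r ≥ (1 : ℝ), DifferentiableAt ℝ φ r)
    (hφC1 : ContinuousOn (deriv φ) (Set.Ici 1))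
    (hφpos : ∀ r ≥ (1 : ℝ), 0 < φ r)
    (hgcont : ContinuousOn g (Set.Ici 1))
    (hODE : ∀ r > (1 : ℝ),
      HasDerivAt (radialF N p φ) (-(lam * r ^ ((N : ℝ) - 1) * g r * φ r ^ (p - 1))) r)
    (hRobin : deriv φ 1 = β ^ (1 / (p - 1)) * φ 1)
    (rstar : ℝ) (hrstar : 1 < rstar) (hcrit : deriv φ rstar = 0) :
    β * φ 1 ^ (p - 1) =
      lam * ∫ s in (1 : ℝ)..rstar, s ^ ((N : ℝ) - 1) * g s * φ s ^ (p - 1) := by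
  have hφ1 := hφpos 1 le_rfl
  have hderiv1 : 0 < deriv φ 1 := hRobin ▸ mul_pos (rpow_pos_of_pos hβ _) hφ1
  have hintegrand : ContinuousOn (fun s => lam * s ^ ((N : ℝ) - 1) * g s * φ s ^ (p - 1))
      (Icc 1 rstar) := by
    intro s hs
    have hs1 : (1 : ℝ) ≤ s := hs.1
    have hpow : ContinuousAt (fun s : ℝ => s ^ ((N : ℝ) - 1)) s :=
      continuousAt_id.rpow_const (Or.inl (by positivity))
    have hφpow : ContinuousAt (fun s => φ s ^ (p - 1)) s :=
      (hφdiff s hs1).continuousAt.rpow_const (Or.inl (hφpos s hs1).ne')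
    exact ((continuousWithinAt_const.mul hpow.continuousWithinAt).mul
      ((hgcont s hs1).mono Icc_subset_Ici_self)).mul hφpow.continuousWithinAt
  have hftc := integral_eq_sub_of_hasDerivAt_of_continuousWithinAt_left hrstar.le
    (continuousWithinAt_radialF_of_deriv_pos one_ne_zero (hφC1 1 self_mem_Ici) hderiv1)
    (fun r hr => hODE r hr.1) (hintegrand.neg.intervalIntegrable_of_Icc hrstar.le)
  rw [radialF_eq_zero_of_deriv_eq_zero hcrit, radialF_one_of_robin hp.ne' hβ hφ1 hRobin,
    intervalIntegral.integral_neg] at hftc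
  simp_rw [mul_assoc, ← intervalIntegral.integral_const_mul] at hftc ⊢
  linarith

/-- The fundamental identity (3.3) relating the Robin parameter, the boundary
value and the weight: `β φ(1)^(p-1) = λ ∫_1^{r_*} s^(N-1) g(s) φ(s)^(p-1) ds`. -/
theorem fundamental_identity (N : ℕ) (p lam β : ℝ)
    (hp : 1 < p) (hpN : p < N) (hlam : 0 < lam) (hβ : 0 < β)
    (φ g : ℝ → ℝ)
    (hφdiff : ∀ r ≥ (1 : ℝ), DifferentiableAt ℝ φ r)
    (hφC1 : ContinuousOn (deriv φ) (Set.Ici 1))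
    (hφpos : ∀ r ≥ (1 : ℝ), 0 < φ r)
    (hgcont : ContinuousOn g (Set.Ici 1))
    (hgpos : ∀ r ≥ (1 : ℝ), 0 < g r)
    (hODE : ∀ r > (1 : ℝ),
      HasDerivAt (radialF N p φ) (-(lam * r ^ ((N : ℝ) - 1) * g r * φ r ^ (p - 1))) r)
    (hRobin : deriv φ 1 = β ^ (1 / (p - 1)) * φ 1)
    (rstar : ℝ) (hrstar : 1 < rstar) (hcrit : deriv φ rstar = 0) :
    β * φ 1 ^ (p - 1) =
      lam * ∫ s in (1 : ℝ)..rstar, s ^ ((N : ℝ) - 1) * g s * φ s ^ (p - 1) :=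
  fundamental_identity_general N p lam β hp hβ φ g hφdiff hφC1 hφpos hgcont hODE hRobin rstar hrstar
    hcrit
end

section
/- Let N be a natural number and p, λ, β real numbers with 1 < p < N, λ > 0, β > 0. Let φ, g : ℝ → ℝ with φ continuously differentiable on [1,∞), φ(r) > 0 for all r ≥ 1, g continuous on [1,∞) with g(r) > 0 for all r ≥ 1, F satisfying the radial eigenvalue ODE on (1,∞), the Robin condition φ'(1) = β^(1/(p−1))·φ(1), and r_* > 1 with φ'(r_*) = 0. Then for every r ≥ 1: φ(r) ≤ φ(1)·(1 + ((p−1)/(N−p))·β^(1/(p−1))). -/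
/-!
The ODE makes `F` nonincreasing on `[1, ∞)`, so `F(r) ≤ F(1) = φ'(1)^(p-1)` by the Robin
condition. Where `φ' > 0` this reads `r^(N-1) φ'(r)^(p-1) ≤ φ'(1)^(p-1)`, i.e.
`φ'(r) ≤ φ'(1) r^(-m)` with `m = (N-1)/(p-1)`, and `m > 1` because `p < N`. Integrating from `1`
to `r` gives `φ(r) - φ(1) ≤ φ'(1)/(m-1) = φ'(1) (p-1)/(N-p)`.
-/

open Real Set Filter Topology

lemma Real.abs_sign_le_one (x : ℝ) : |Real.sign x| ≤ 1 := by
  rcases Real.sign_apply_eq x with h | h | h <;> simp [h]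

lemma continuous_sign_mul_abs_rpow {q : ℝ} (hq : 0 < q) :
    Continuous fun x : ℝ => Real.sign x * |x| ^ q := by
  have hpow : Continuous fun x : ℝ => |x| ^ q :=
    continuous_abs.rpow_const fun _ => Or.inr hq.le
  refine continuous_iff_continuousAt.2 fun a => ?_
  rcases lt_trichotomy a 0 with ha | rfl | ha
  · refine hpow.neg.continuousAt.congr ?_
    filter_upwards [eventually_lt_nhds ha] with x hx
    simp [Real.sign_of_neg hx]
  · have hlim : Tendsto (fun x : ℝ => |x| ^ q) (𝓝 0) (𝓝 0) := by
      simpa [Real.zero_rpow hq.ne'] using hpow.tendsto 0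
    rw [ContinuousAt, Real.sign_zero, zero_mul]
    refine squeeze_zero_norm (fun x => ?_) hlim
    rw [Real.norm_eq_abs, abs_mul, abs_of_nonneg (by positivity : (0 : ℝ) ≤ |x| ^ q)]
    exact mul_le_of_le_one_left (by positivity) (Real.abs_sign_le_one x)
  · refine hpow.continuousAt.congr ?_
    filter_upwards [eventually_gt_nhds ha] with x hx
    simp [Real.sign_of_pos hx]

lemma continuousOn_radialF {N : ℕ} {p : ℝ} {φ : ℝ → ℝ} {s : Set ℝ} (hp : 1 < p)
    (hs : ∀ r ∈ s, r ≠ 0) (hφ' : ContinuousOn (deriv φ) s) :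
    ContinuousOn (radialF N p φ) s := by
  have hpow : ContinuousOn (fun r : ℝ => r ^ ((N : ℝ) - 1)) s :=
    continuousOn_id.rpow_const fun r hr => Or.inl (hs r hr)
  refine (hpow.mul ((continuous_sign_mul_abs_rpow (sub_pos.2 hp)).comp_continuousOn hφ')).congr
    fun r _ => ?_
  simp only [radialF, Pi.mul_apply, Function.comp_apply, mul_assoc]

lemma radialF_of_deriv_pos {N : ℕ} {p : ℝ} {φ : ℝ → ℝ} {r : ℝ} (hd : 0 < deriv φ r) :
    radialF N p φ r = r ^ ((N : ℝ) - 1) * deriv φ r ^ (p - 1) := by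
  rw [radialF, Real.sign_of_pos hd, abs_of_pos hd, mul_one]

lemma deriv_le_mul_rpow_of_radialF_le {N : ℕ} {p A r : ℝ} {φ : ℝ → ℝ} (hp : 1 < p)
    (hr : 0 < r) (hA : 0 ≤ A) (hF : radialF N p φ r ≤ A ^ (p - 1)) :
    deriv φ r ≤ A * r ^ (-(((N : ℝ) - 1) / (p - 1))) := by
  rcases le_or_gt (deriv φ r) 0 with hd | hd
  · exact hd.trans (by positivity)
  have hp1 : p - 1 ≠ 0 := (sub_pos.2 hp).ne'
  have hpow : (deriv φ r * r ^ (((N : ℝ) - 1) / (p - 1))) ^ (p - 1) ≤ A ^ (p - 1) := by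
    rwa [Real.mul_rpow hd.le (by positivity), ← Real.rpow_mul hr.le, div_mul_cancel₀ _ hp1,
      mul_comm, ← radialF_of_deriv_pos hd]
  rw [Real.rpow_neg hr.le, ← div_eq_mul_inv, le_div_iff₀ (by positivity)]
  exact (Real.rpow_le_rpow_iff (by positivity) hA (sub_pos.2 hp)).1 hpow

lemma sub_le_div_of_deriv_le_mul_rpow_neg {f : ℝ → ℝ} {c m r : ℝ} (hm : 1 < m) (hc : 0 ≤ c)
    (hf : ∀ s ≥ 1, DifferentiableAt ℝ f s) (hf' : ∀ s > 1, deriv f s ≤ c * s ^ (-m))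
    (hr : 1 ≤ r) : f r - f 1 ≤ c / (m - 1) := by
  have hm1 : m - 1 ≠ 0 := (sub_pos.2 hm).ne'
  set G : ℝ → ℝ := fun s => f s + c / (m - 1) * s ^ (1 - m)
  have hG' : ∀ s > (1 : ℝ), HasDerivAt G (deriv f s - c * s ^ (-m)) s := by
    intro s hs
    refine ((hf s hs.le).hasDerivAt.add
      ((Real.hasDerivAt_rpow_const (p := 1 - m) (Or.inl (by positivity))).const_mul
        (c / (m - 1)))).congr_deriv ?_
    rw [show 1 - m - 1 = -m by ring]
    field_simp
    ring
  have hGanti : AntitoneOn G (Ici 1) := by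
    refine antitoneOn_of_hasDerivWithinAt_nonpos (convex_Ici 1)
      (f' := fun s => deriv f s - c * s ^ (-m)) ?_ ?_ ?_
    · intro s hs
      exact ((hf s hs).continuousAt.add (continuousAt_const.mul
        (Real.continuousAt_rpow_const _ _ (Or.inl (by simp at hs; positivity))))).continuousWithinAt
    · rw [interior_Ici]
      exact fun s hs => (hG' s hs).hasDerivWithinAt
    · rw [interior_Ici]
      exact fun s hs => sub_nonpos.2 (hf' s hs)
  have hGr := hGanti (mem_Ici.2 le_rfl) (mem_Ici.2 hr) hr
  have htail : 0 ≤ c / (m - 1) * r ^ (1 - m) := by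
    have := sub_pos.2 hm
    positivity
  simp only [G, Real.one_rpow, mul_one] at hGr
  linarith

theorem global_pointwise_bound_general (N : ℕ) (p lam β : ℝ)
    (hp : 1 < p) (hpN : p < N) (hlam : 0 < lam) (hβ : 0 < β)
    (φ g : ℝ → ℝ)
    (hφdiff : ∀ r ≥ (1 : ℝ), DifferentiableAt ℝ φ r)
    (hφC1 : ContinuousOn (deriv φ) (Set.Ici 1))
    (hφpos : ∀ r ≥ (1 : ℝ), 0 < φ r)
    (hgpos : ∀ r ≥ (1 : ℝ), 0 < g r)
    (hODE : ∀ r > (1 : ℝ),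
      HasDerivAt (radialF N p φ) (-(lam * r ^ ((N : ℝ) - 1) * g r * φ r ^ (p - 1))) r)
    (hRobin : deriv φ 1 = β ^ (1 / (p - 1)) * φ 1) :
    ∀ r ≥ (1 : ℝ),
      φ r ≤ φ 1 * (1 + ((p - 1) / ((N : ℝ) - p)) * β ^ (1 / (p - 1))) := by
  have hm : 1 < ((N : ℝ) - 1) / (p - 1) := by
    rw [one_lt_div (by linarith)]; linarith
  have hd1 : 0 < deriv φ 1 := hRobin ▸ mul_pos (by positivity) (hφpos 1 le_rfl)
  have hFanti : AntitoneOn (radialF N p φ) (Ici 1) := by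
    refine antitoneOn_of_hasDerivWithinAt_nonpos (convex_Ici 1)
      (f' := fun r => -(lam * r ^ ((N : ℝ) - 1) * g r * φ r ^ (p - 1)))
      (continuousOn_radialF hp (fun r hr => (zero_lt_one.trans_le hr).ne') hφC1) ?_ ?_ <;>
      rw [interior_Ici]
    · exact fun r hr => (hODE r hr).hasDerivWithinAt
    · intro r hr
      have := hgpos r hr.le
      have := hφpos r hr.le
      have : 0 < r := zero_lt_one.trans hr
      exact neg_nonpos.2 (by positivity)
  have hderiv : ∀ s > (1 : ℝ), deriv φ s ≤ deriv φ 1 * s ^ (-(((N : ℝ) - 1) / (p - 1))) :=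
    fun s hs => deriv_le_mul_rpow_of_radialF_le hp (zero_lt_one.trans hs) hd1.le <|
      (hFanti (mem_Ici.2 le_rfl) (mem_Ici.2 hs.le) hs.le).trans_eq <| by
        rw [radialF_of_deriv_pos hd1, Real.one_rpow, one_mul]
  intro r hr
  have hφr := sub_le_div_of_deriv_le_mul_rpow_neg hm hd1.le hφdiff hderiv hr
  have hden : ((N : ℝ) - 1) / (p - 1) - 1 = ((N : ℝ) - p) / (p - 1) := by
    field_simp [(sub_pos.2 hp).ne']; ring
  rw [hden, div_div_eq_mul_div, hRobin] at hφr
  have hrhs : φ 1 * (1 + ((p - 1) / ((N : ℝ) - p)) * β ^ (1 / (p - 1)))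
      = φ 1 + β ^ (1 / (p - 1)) * φ 1 * (p - 1) / ((N : ℝ) - p) := by ring
  linarith

/-- Global pointwise bound (3.5) on the radial principal eigenfunction:
`φ(r) ≤ φ(1) (1 + ((p-1)/(N-p)) β^(1/(p-1)))` for all `r ≥ 1`. -/
theorem global_pointwise_bound (N : ℕ) (p lam β : ℝ)
    (hp : 1 < p) (hpN : p < N) (hlam : 0 < lam) (hβ : 0 < β)
    (φ g : ℝ → ℝ)
    (hφdiff : ∀ r ≥ (1 : ℝ), DifferentiableAt ℝ φ r)
    (hφC1 : ContinuousOn (deriv φ) (Set.Ici 1))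
    (hφpos : ∀ r ≥ (1 : ℝ), 0 < φ r)
    (hgcont : ContinuousOn g (Set.Ici 1))
    (hgpos : ∀ r ≥ (1 : ℝ), 0 < g r)
    (hODE : ∀ r > (1 : ℝ),
      HasDerivAt (radialF N p φ) (-(lam * r ^ ((N : ℝ) - 1) * g r * φ r ^ (p - 1))) r)
    (hRobin : deriv φ 1 = β ^ (1 / (p - 1)) * φ 1)
    (rstar : ℝ) (hrstar : 1 < rstar) (hcrit : deriv φ rstar = 0) :
    ∀ r ≥ (1 : ℝ),
      φ r ≤ φ 1 * (1 + ((p - 1) / ((N : ℝ) - p)) * β ^ (1 / (p - 1))) :=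
  global_pointwise_bound_general N p lam β hp hpN hlam hβ φ g hφdiff hφC1 hφpos hgpos hODE hRobin
end

section
/- Let N be a natural number and p, β real numbers with 1 < p < N and β > 0, and let r_* > 1. Let v : ℝ → ℝ be continuous on [1,∞) with v(r) ≥ 0 for all r ≥ 1, v(r_*) = 0, and v(r) > 0 for every r ∈ [1,∞) with r ≠ r_*. Assume: (i) there exist c₀ > 0 and ρ₀ > 0 such that v(r) ≥ c₀·|r − r_*|^(1/(p−1)) whenever |r − r_*| < ρ₀; and (ii) there exists Ĉ₁ > 0 such that v(r) ≥ Ĉ₁·r^(−(N−1)/(p−1)) for all r ≥ 2r_*. Let L > 0, let γ ≥ max(2, (N−1)/(p−1)), and let δ > 0 with δ < ρ₀. Define τ(t) := 1/(1 + (t/L)^γ) and σ(r) := (|r − r_*|/(|r − r_*| + δ))^(1/(p−1)). Then there exists a constant C₁ > 0 such that for all r ≥ 1: v(r) ≥ C₁·σ(r)·(τ(r−1)·β^(1/(p−1)) + (1 − τ(r−1))·r^(−(N−1)/(p−1))). -/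
open Real Set

/-- Unified gradient lower bound of Theorem 1.5, with transition function
`τ(t) = 1/(1 + (t/L)^γ)` and critical-point modulation
`σ(r) = (|r - r_*|/(|r - r_*| + δ))^(1/(p-1))`. -/
theorem unified_gradient_lower (N : ℕ) (p β : ℝ)
    (hp : 1 < p) (hpN : p < N) (hβ : 0 < β)
    (rstar : ℝ) (hrstar : 1 < rstar)
    (v : ℝ → ℝ)
    (hvcont : ContinuousOn v (Set.Ici 1))
    (hvnonneg : ∀ r ≥ (1 : ℝ), 0 ≤ v r)
    (hvrstar : v rstar = 0)
    (hvpos : ∀ r ≥ (1 : ℝ), r ≠ rstar → 0 < v r)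
    (c₀ ρ₀ : ℝ) (hc₀ : 0 < c₀) (hρ₀ : 0 < ρ₀)
    (hnear : ∀ r : ℝ, |r - rstar| < ρ₀ → c₀ * |r - rstar| ^ (1 / (p - 1)) ≤ v r)
    (Chat₁ : ℝ) (hChat₁ : 0 < Chat₁)
    (hfar : ∀ r ≥ 2 * rstar, Chat₁ * r ^ (-((N : ℝ) - 1) / (p - 1)) ≤ v r)
    (L γ δ : ℝ) (hL : 0 < L) (hγ : max 2 (((N : ℝ) - 1) / (p - 1)) ≤ γ)
    (hδ : 0 < δ) (hδρ : δ < ρ₀) :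
    ∃ C₁ > (0 : ℝ), ∀ r ≥ (1 : ℝ),
      C₁ * (|r - rstar| / (|r - rstar| + δ)) ^ (1 / (p - 1)) *
          ((1 / (1 + ((r - 1) / L) ^ γ)) * β ^ (1 / (p - 1)) +
            (1 - 1 / (1 + ((r - 1) / L) ^ γ)) * r ^ (-((N : ℝ) - 1) / (p - 1))) ≤ v r := by
  have hp1 : (0:ℝ) < p - 1 := by linarith
  have hN2 : (1:ℝ) < (N:ℝ) := lt_trans hp hpN
  rw [show -((N : ℝ) - 1) / (p - 1) = -(((N : ℝ) - 1) / (p - 1)) from neg_div _ _]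
  set a := 1 / (p - 1) with ha_def
  have ha : 0 < a := by positivity
  set b := ((N:ℝ) - 1) / (p - 1) with hb_def
  have hb : 0 < b := by apply div_pos <;> linarith
  have hγ2 : (2:ℝ) ≤ γ := le_trans (le_max_left _ _) hγ
  have hγb : b ≤ γ := le_trans (le_max_right _ _) hγ
  have hγ0 : (0:ℝ) < γ := by linarith
  set M := β ^ a + 1 with hM_def
  have hβa : 0 < β ^ a := Real.rpow_pos_of_pos hβ a
  have hM : 0 < M := by positivity
  -- minimum on the middle region
  obtain ⟨m, hm0, hmK⟩ : ∃ m > (0:ℝ), ∀ r ∈ Icc (1:ℝ) (2*rstar) ∩ {r : ℝ | δ ≤ |r - rstar|},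
      m ≤ v r := by
    by_cases hK : (Icc (1:ℝ) (2*rstar) ∩ {r : ℝ | δ ≤ |r - rstar|}).Nonempty
    · have hKc : IsCompact (Icc (1:ℝ) (2*rstar) ∩ {r : ℝ | δ ≤ |r - rstar|}) :=
        isCompact_Icc.inter_right
          (isClosed_le continuous_const ((continuous_id.sub continuous_const).abs))
      obtain ⟨x₀, hx₀K, hx₀min⟩ := hKc.exists_isMinOn hK
        (hvcont.mono (fun y hy => hy.1.1))
      refine ⟨v x₀, ?_, fun r hrK => hx₀min hrK⟩
      refine hvpos x₀ hx₀K.1.1 (fun h => ?_)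
      have := hx₀K.2
      rw [h] at this
      simp at this
      linarith
    · exact ⟨1, one_pos, fun r hr => absurd ⟨r, hr⟩ hK⟩
  have hδa : 0 < δ ^ a := Real.rpow_pos_of_pos hδ a
  set Cf := β ^ a * L ^ γ * (2:ℝ) ^ b + 1 with hCf_def
  have hLγ : 0 < L ^ γ := Real.rpow_pos_of_pos hL γ
  have h2b : 0 < (2:ℝ) ^ b := Real.rpow_pos_of_pos two_pos b
  have hCf : 0 < Cf := by positivity
  refine ⟨min (min (c₀ * δ ^ a / M) (m / M)) (Chat₁ / Cf),
    lt_min (lt_min (by positivity) (by positivity)) (by positivity), ?_⟩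
  set C₁ := min (min (c₀ * δ ^ a / M) (m / M)) (Chat₁ / Cf) with hC₁_def
  have hC₁0 : 0 < C₁ :=
    lt_min (lt_min (by positivity) (by positivity)) (by positivity)
  intro r hr
  have hx0 : (0:ℝ) ≤ |r - rstar| := abs_nonneg _
  set x := |r - rstar| with hx_def
  have hxδ : 0 < x + δ := by linarith
  -- σ facts
  have hσ0 : 0 ≤ (x / (x + δ)) ^ a := Real.rpow_nonneg (by positivity) a
  have hσ1 : (x / (x + δ)) ^ a ≤ 1 :=
    Real.rpow_le_one (by positivity) (by rw [div_le_one hxδ]; linarith) ha.le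
  -- τ facts
  have ht0 : (0:ℝ) ≤ (r - 1) / L := div_nonneg (by linarith) hL.le
  have hT0 : (0:ℝ) ≤ ((r - 1) / L) ^ γ := Real.rpow_nonneg ht0 γ
  have hT1 : (0:ℝ) < 1 + ((r - 1) / L) ^ γ := by linarith
  set τ := 1 / (1 + ((r - 1) / L) ^ γ) with hτ_def
  have hτ0 : 0 < τ := by positivity
  have hτ1 : τ ≤ 1 := by
    rw [hτ_def, div_le_one hT1]; linarith
  -- r^{-b} facts
  have hr0 : (0:ℝ) < r := by linarith
  have hrb0 : 0 < r ^ (-b) := Real.rpow_pos_of_pos hr0 _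
  have hrb1 : r ^ (-b) ≤ 1 :=
    Real.rpow_le_one_of_one_le_of_nonpos hr (by linarith)
  -- bracket bound
  set B := τ * β ^ a + (1 - τ) * r ^ (-b) with hB_def
  have hB0 : 0 ≤ B := by
    have h1 : 0 ≤ (1 - τ) * r ^ (-b) := mul_nonneg (by linarith) hrb0.le
    have h2 : 0 ≤ τ * β ^ a := mul_nonneg hτ0.le hβa.le
    rw [hB_def]; linarith
  have hBM : B ≤ M := by
    have h1 : τ * β ^ a ≤ 1 * β ^ a := by
      apply mul_le_mul_of_nonneg_right hτ1 hβa.le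
    have h2 : (1 - τ) * r ^ (-b) ≤ 1 * 1 := by
      apply mul_le_mul (by linarith) hrb1 hrb0.le zero_le_one
    rw [hB_def, hM_def]; linarith
  by_cases hnearc : x < δ
  · -- near case
    have hv : c₀ * x ^ a ≤ v r := hnear r (by rw [← hx_def]; linarith)
    have hσx : (x / (x + δ)) ^ a ≤ x ^ a / δ ^ a := by
      rw [Real.div_rpow hx0 hxδ.le]
      apply div_le_div_of_nonneg_left (Real.rpow_nonneg hx0 a) hδa
      exact Real.rpow_le_rpow hδ.le (by linarith) ha.le
    calc C₁ * (x / (x + δ)) ^ a * B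
        ≤ (c₀ * δ ^ a / M) * (x ^ a / δ ^ a) * M := by
          apply mul_le_mul (mul_le_mul ?_ hσx hσ0 (by positivity)) hBM hB0 (by positivity)
          exact le_trans (min_le_left _ _) (min_le_left _ _)
      _ = c₀ * x ^ a := by field_simp
      _ ≤ v r := hv
  · push_neg at hnearc
    by_cases hmid : r ≤ 2 * rstar
    · -- middle case
      have hv : m ≤ v r := hmK r ⟨⟨hr, hmid⟩, hnearc⟩
      calc C₁ * (x / (x + δ)) ^ a * B
          ≤ (m / M) * 1 * M := by
            apply mul_le_mul (mul_le_mul ?_ hσ1 hσ0 (by positivity)) hBM hB0 (by positivity)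
            exact le_trans (min_le_left _ _) (min_le_right _ _)
        _ = m := by field_simp
        _ ≤ v r := hv
    · -- far case
      push_neg at hmid
      have hr2 : (2:ℝ) < r := by linarith
      have hr1 : (1:ℝ) ≤ r - 1 := by linarith
      have hr12 : r / 2 ≤ r - 1 := by linarith
      have hv : Chat₁ * r ^ (-b) ≤ v r := by
        have := hfar r (le_of_lt hmid)
        rwa [show -((N : ℝ) - 1) / (p - 1) = -b from neg_div _ _] at this
      -- τ ≤ L^γ * 2^b * r^{-b}
      have hτbound : τ ≤ L ^ γ * (2:ℝ) ^ b * r ^ (-b) := by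
        have htpos : 0 < (r - 1) / L := by positivity
        have hTpos : 0 < ((r - 1) / L) ^ γ := Real.rpow_pos_of_pos htpos γ
        have h1 : τ ≤ (((r - 1) / L) ^ γ)⁻¹ := by
          rw [hτ_def, one_div]
          exact inv_anti₀ hTpos (by linarith)
        have h2 : (((r - 1) / L) ^ γ)⁻¹ = L ^ γ * (r - 1) ^ (-γ) := by
          rw [Real.div_rpow (by linarith) hL.le, Real.rpow_neg (by linarith)]
          field_simp
        have h3 : (r - 1) ^ (-γ) ≤ (r - 1) ^ (-b) :=
          Real.rpow_le_rpow_of_exponent_le hr1 (by linarith)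
        have h4 : (r - 1) ^ (-b) ≤ (r / 2) ^ (-b) := by
          apply Real.rpow_le_rpow_of_nonpos (by linarith) hr12 (by linarith)
        have h5 : (r / 2) ^ (-b) = (2:ℝ) ^ b * r ^ (-b) := by
          rw [Real.div_rpow hr0.le (by norm_num), Real.rpow_neg hr0.le,
            Real.rpow_neg (by norm_num : (0:ℝ) ≤ 2)]
          field_simp
        calc τ ≤ (((r - 1) / L) ^ γ)⁻¹ := h1
          _ = L ^ γ * (r - 1) ^ (-γ) := h2
          _ ≤ L ^ γ * ((2:ℝ) ^ b * r ^ (-b)) := by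
              apply mul_le_mul_of_nonneg_left _ hLγ.le
              calc (r - 1) ^ (-γ) ≤ (r - 1) ^ (-b) := h3
                _ ≤ (r / 2) ^ (-b) := h4
                _ = (2:ℝ) ^ b * r ^ (-b) := h5
          _ = L ^ γ * (2:ℝ) ^ b * r ^ (-b) := by ring
      have hBCf : B ≤ Cf * r ^ (-b) := by
        have h1 : τ * β ^ a ≤ (L ^ γ * (2:ℝ) ^ b * r ^ (-b)) * β ^ a :=
          mul_le_mul_of_nonneg_right hτbound hβa.le
        have h2 : (1 - τ) * r ^ (-b) ≤ 1 * r ^ (-b) :=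
          mul_le_mul_of_nonneg_right (by linarith) hrb0.le
        calc B = τ * β ^ a + (1 - τ) * r ^ (-b) := hB_def
          _ ≤ (L ^ γ * (2:ℝ) ^ b * r ^ (-b)) * β ^ a + 1 * r ^ (-b) := add_le_add h1 h2
          _ = Cf * r ^ (-b) := by rw [hCf_def]; ring
      calc C₁ * (x / (x + δ)) ^ a * B
          ≤ (Chat₁ / Cf) * 1 * (Cf * r ^ (-b)) := by
            apply mul_le_mul (mul_le_mul (min_le_right _ _) hσ1 hσ0 (by positivity))
              hBCf hB0 (by positivity)
        _ = Chat₁ * r ^ (-b) := by field_simp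
        _ ≤ v r := hv
end
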